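/- Let A be a finite alphabet and let R be a topological Markov chain on A that is primitive with constant κ, i.e., for all α, β ∈ A there is a word u ∈ A^κ with αuβ R-admissible. Let n ≥ 2κ + 3, let a₁…a_n be a circularly R-admissible word of length n, let i be a position (taken modulo n), and let α ∈ A. Then there exists a circularly R-admissible word a′₁…a′_n with a′_i = α and a′_j = a_j for every position j outside the cyclic window {i−κ, i−κ+1, …, i+κ} (indices modulo n). -/
import Mathlib


/-- A (linear) word is `R`-admissible if all its consecutive transitions are in `R`. -/
def IsAdm {A : Type*} (R : A → A → Prop) {n : ℕ} (a : Fin n → A) : Prop :=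
  ∀ i : Fin n, (h : i.val + 1 < n) → R (a i) (a ⟨i.val + 1, h⟩)

/-- A circular word `a : ℤ/nℤ → A` is circularly `R`-admissible if
`R (a ι) (a (ι + 1))` for all `ι`. -/
def IsCircAdm {A : Type*} (R : A → A → Prop) {n : ℕ} (a : ZMod n → A) : Prop :=
  ∀ ι : ZMod n, R (a ι) (a (ι + 1))

section Aux

variable {A : Type*} {R : A → A → Prop} {κ : ℕ} {α β : A} {u : Fin κ → A}

private lemma adm_step {m : ℕ} {w : Fin m → A} (h : IsAdm R w) (t : ℕ) (ht : t + 1 < m) :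
    R (w ⟨t, by omega⟩) (w ⟨t + 1, ht⟩) :=
  h ⟨t, by omega⟩ ht

private lemma consSnoc_zero (h : 0 < κ + 2) :
    (Fin.cons α (Fin.snoc u β) : Fin (κ+2) → A) ⟨0, h⟩ = α := by
  simp [Fin.cons]

private lemma consSnoc_mid (t : ℕ) (ht : t < κ) (h : t + 1 < κ + 2) :
    (Fin.cons α (Fin.snoc u β) : Fin (κ+2) → A) ⟨t+1, h⟩ = u ⟨t, ht⟩ := by
  simp [Fin.cons, Fin.snoc, ht]

private lemma consSnoc_last (h : κ + 1 < κ + 2) :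
    (Fin.cons α (Fin.snoc u β) : Fin (κ+2) → A) ⟨κ+1, h⟩ = β := by
  simp [Fin.cons, Fin.snoc]

private lemma consSnoc_mid' (t : ℕ) (h0 : 0 < t) (ht : t ≤ κ) (h : t < κ + 2) :
    (Fin.cons α (Fin.snoc u β) : Fin (κ+2) → A) ⟨t, h⟩ = u ⟨t - 1, by omega⟩ := by
  obtain ⟨s, rfl⟩ : ∃ s, t = s + 1 := ⟨t - 1, by omega⟩
  rw [consSnoc_mid s (by omega)]
  congr 1

private lemma adm_head (hκ : 0 < κ) (h : IsAdm R (Fin.cons α (Fin.snoc u β))) :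
    R α (u ⟨0, hκ⟩) := by
  have := adm_step h 0 (by omega)
  rwa [consSnoc_zero, consSnoc_mid 0 hκ] at this

private lemma adm_mid (t : ℕ) (ht : t + 1 < κ) (h : IsAdm R (Fin.cons α (Fin.snoc u β))) :
    R (u ⟨t, by omega⟩) (u ⟨t+1, ht⟩) := by
  have := adm_step h (t+1) (by omega)
  rwa [consSnoc_mid t (by omega), consSnoc_mid (t+1) ht] at this

private lemma adm_last (hκ : 0 < κ) (h : IsAdm R (Fin.cons α (Fin.snoc u β))) :
    R (u ⟨κ-1, by omega⟩) β := by
  have := adm_step h κ (by omega)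
  rwa [consSnoc_mid' κ hκ le_rfl, consSnoc_last] at this

end Aux

theorem letter_replacement_in_cyclic_window
    {A : Type*} [Finite A] (R : A → A → Prop) (κ : ℕ) (hκ : 1 ≤ κ)
    (hprim : ∀ α β : A, ∃ u : Fin κ → A, IsAdm R (Fin.cons α (Fin.snoc u β)))
    (n : ℕ) (hn : 2 * κ + 3 ≤ n)
    (a : ZMod n → A) (ha : IsCircAdm R a) (i : ZMod n) (α : A) :
    ∃ a' : ZMod n → A, IsCircAdm R a' ∧ a' i = α ∧
      ∀ j : ZMod n, (∀ t : ℤ, |t| ≤ (κ : ℤ) → j ≠ i + (t : ZMod n)) → a' j = a j := by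
  classical
  haveI : NeZero n := ⟨by omega⟩
  haveI : Fact (1 < n) := ⟨by omega⟩
  obtain ⟨u, hu⟩ := hprim (a (i - ((κ+1 : ℕ) : ZMod n))) α
  obtain ⟨v, hv⟩ := hprim α (a (i + ((κ+1 : ℕ) : ZMod n)))
  have hvlt : ∀ x : ZMod n, x.val < n := fun x => ZMod.val_lt x
  set a' : ZMod n → A := fun j =>
    if h0 : (j - i).val = 0 then α
    else if hd : (j - i).val ≤ κ then v ⟨(j - i).val - 1, by omega⟩
    else if hd2 : n - κ ≤ (j - i).val then
      u ⟨(j - i).val - (n - κ), by have := hvlt (j - i); omega⟩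
    else a j with ha'
  have ev0 : ∀ j : ZMod n, (j - i).val = 0 → a' j = α := by
    intro j h; simp only [ha', h]; simp
  have evv : ∀ j : ZMod n, ∀ (h0 : (j - i).val ≠ 0) (h1 : (j - i).val ≤ κ),
      a' j = v ⟨(j - i).val - 1, by omega⟩ := by
    intro j h0 h1; simp only [ha']; rw [dif_neg h0, dif_pos h1]
  have evu : ∀ j : ZMod n, ∀ (h0 : (j - i).val ≠ 0) (h1 : ¬ (j - i).val ≤ κ)
      (h2 : n - κ ≤ (j - i).val),
      a' j = u ⟨(j - i).val - (n - κ), by have := hvlt (j - i); omega⟩ := by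
    intro j h0 h1 h2; simp only [ha']; rw [dif_neg h0, dif_neg h1, dif_pos h2]
  have eva : ∀ j : ZMod n, (j - i).val ≠ 0 → ¬ (j - i).val ≤ κ → ¬ n - κ ≤ (j - i).val →
      a' j = a j := by
    intro j h0 h1 h2; simp only [ha']; rw [dif_neg h0, dif_neg h1, dif_neg h2]
  have hrec : ∀ j : ZMod n, j = i + (((j - i).val : ℕ) : ZMod n) := by
    intro j
    rw [ZMod.natCast_rightInverse (j - i)]; ring
  have hstep : ∀ ι : ZMod n, ((ι + 1) - i).val = ((ι - i).val + 1) % n := by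
    intro ι
    have e : ι + 1 - i = (ι - i) + 1 := by ring
    rw [e, ZMod.val_add, ZMod.val_one]
  refine ⟨a', ?_, ev0 i (by simp), ?_⟩
  · intro ι
    set d := (ι - i).val with hdd
    have hdlt : d < n := hvlt _
    by_cases hlast : d = n - 1
    · -- d = n - 1 : R (u (κ-1)) α
      have hd1 : ((ι + 1) - i).val = 0 := by
        rw [hstep ι, ← hdd, show d + 1 = n from by omega, Nat.mod_self]
      rw [evu ι (by omega) (by omega) (by omega), ev0 (ι+1) hd1]
      have := adm_last (by omega) hu
      convert this using 2
      simp only [Fin.mk.injEq]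
      omega
    · have hd1 : ((ι + 1) - i).val = d + 1 := by
        rw [hstep ι, ← hdd, Nat.mod_eq_of_lt (by omega)]
      by_cases h0 : d = 0
      · -- R α v₀
        rw [ev0 ι h0, evv (ι+1) (by omega) (by rw [hd1]; omega)]
        have := adm_head (by omega) hv
        convert this using 2
        simp only [Fin.mk.injEq]
        omega
      · by_cases hA : d < κ
        · rw [evv ι h0 (by omega), evv (ι+1) (by omega) (by rw [hd1]; omega)]
          have := adm_mid (d - 1) (by omega) hv
          convert this using 2 <;> simp only [Fin.mk.injEq] <;> omega
        · by_cases hB : d = κ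
          · -- R (v (κ-1)) (a (i + (κ+1)))
            have hι1 : a (ι + 1) = a (i + ((κ + 1 : ℕ) : ZMod n)) := by
              have h1 := hrec ι
              rw [← hdd, hB] at h1
              congr 1
              rw [h1]; push_cast; ring
            rw [evv ι h0 (by omega), eva (ι+1) (by omega) (by rw [hd1]; omega)
              (by rw [hd1]; omega), hι1]
            have := adm_last (by omega) hv
            convert this using 2
            simp only [Fin.mk.injEq]
            omega
          · by_cases hC : d < n - κ - 1
            · rw [eva ι h0 (by omega) (by omega),
                eva (ι+1) (by omega) (by rw [hd1]; omega) (by rw [hd1]; omega)]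
              exact ha ι
            · by_cases hD : d = n - κ - 1
              · -- R (a (i - (κ+1))) u₀
                have hι : a ι = a (i - ((κ + 1 : ℕ) : ZMod n)) := by
                  have h1 := hrec ι
                  rw [← hdd, hD] at h1
                  have h2 : ((n - κ - 1 : ℕ) : ZMod n) = - ((κ + 1 : ℕ) : ZMod n) := by
                    refine eq_neg_of_add_eq_zero_left ?_
                    rw [← Nat.cast_add, show n - κ - 1 + (κ + 1) = n from by omega,
                      ZMod.natCast_self]
                  congr 1
                  rw [h1, h2]; ring
                rw [eva ι h0 (by omega) (by omega),
                  evu (ι+1) (by omega) (by rw [hd1]; omega) (by rw [hd1]; omega), hι]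
                have := adm_head (by omega) hu
                convert this using 2
                simp only [Fin.mk.injEq]
                omega
              · -- n - κ ≤ d ≤ n - 2
                rw [evu ι h0 (by omega) (by omega),
                  evu (ι+1) (by omega) (by rw [hd1]; omega) (by rw [hd1]; omega)]
                have := adm_mid (d - (n - κ)) (by omega) hu
                convert this using 2 <;> simp only [Fin.mk.injEq] <;> omega
  · intro j hj
    set d := (j - i).val with hdd
    have hdlt : d < n := hvlt _
    have hjd : j = i + ((d : ℕ) : ZMod n) := hrec j
    by_cases h1 : d ≤ κ
    · exfalso
      have habs : |(d : ℤ)| ≤ (κ : ℤ) := by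
        rw [abs_of_nonneg (by positivity)]; exact_mod_cast h1
      refine hj (d : ℤ) habs ?_
      rw [hjd]; push_cast; ring
    · by_cases h2 : n - κ ≤ d
      · exfalso
        have habs : |(d : ℤ) - (n : ℤ)| ≤ (κ : ℤ) := by
          rw [abs_sub_comm, abs_of_nonneg (by push_cast; omega)]
          push_cast
          omega
        refine hj ((d : ℤ) - (n : ℤ)) habs ?_
        rw [hjd]
        congr 1
        push_cast
        simp [ZMod.natCast_self]
      · exact eva j (by omega) h1 h2
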